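/- Every nontrivial tree T has bondage number b(T) ≤ 2. -/

import Mathlib

open SimpleGraph

variable {V : Type*}

/-- `S` is a dominating set of `G`: every vertex is in `S` or has a neighbor in `S`. -/
def SimpleGraph.IsDomSet (G : SimpleGraph V) (S : Finset V) : Prop :=
  ∀ v : V, v ∈ S ∨ ∃ u ∈ S, G.Adj u v

/-- The domination number of a finite graph. -/
noncomputable def SimpleGraph.domNum [Fintype V] (G : SimpleGraph V) : ℕ :=
  sInf {n | ∃ S : Finset V, S.card = n ∧ G.IsDomSet S}

/-- The bondage number: the minimum size of a set of edges of `G` whose removal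
increases the domination number. -/
noncomputable def SimpleGraph.bondageNum [Fintype V] (G : SimpleGraph V) : ℕ :=
  sInf {n | ∃ B : Finset (Sym2 V), B.card = n ∧ ↑B ⊆ G.edgeSet ∧
    G.domNum < (G.deleteEdges ↑B).domNum}

/-!
Root the tree anywhere and let `v₀` be a vertex farthest from the root. Then `v₀` is a leaf,
and every child of its parent `v` is a leaf as well. Either `v` carries a second leaf `b`, and
cutting the edge `v v₀` raises the domination number, or `v` has at most one neighbour
besides `v₀`, and cutting the (at most two) edges at `v` does.

In both cases the cut graph has a minimum dominating set `D` containing the isolated vertex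
`v₀` and also `v` (for a second leaf `b` at `v`, swap `b` for `v` if needed). Since `v`
dominates `v₀` in the original tree, `D \ {v₀}` dominates the tree, whose domination number
is therefore smaller than that of the cut graph.
-/

namespace SimpleGraph

open Finset

def IsLeafAt (G : SimpleGraph V) (a v : V) : Prop :=
  G.Adj a v ∧ ∀ x, G.Adj a x → x = v

variable {G H : SimpleGraph V} {S D : Finset V} {a b v : V}

lemma IsDomSet.mem_of_isIsolated (hS : G.IsDomSet S) (ha : G.IsIsolated a) : a ∈ S :=
  (hS a).resolve_right fun ⟨_, _, hua⟩ => ha _ hua.symm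

lemma IsDomSet.erase_of_isIsolated [DecidableEq V] (hGH : G ≤ H) (hD : G.IsDomSet D) (ha : G.IsIsolated a)
    (hv : v ∈ D) (hva : H.Adj v a) : H.IsDomSet (D.erase a) := by
  intro x
  by_cases hxa : x = a
  · subst hxa
    exact Or.inr ⟨v, mem_erase.2 ⟨hva.ne, hv⟩, hva⟩
  rcases hD x with hx | ⟨u, hu, hux⟩
  · exact Or.inl (mem_erase.2 ⟨hxa, hx⟩)
  · have hua : u ≠ a := by
      rintro rfl
      exact ha x hux
    exact Or.inr ⟨u, mem_erase.2 ⟨hua, hu⟩, hGH hux⟩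

lemma IsDomSet.exists_mem_of_isLeafAt (hD : G.IsDomSet D) (hb : G.IsLeafAt b v) :
    ∃ D', G.IsDomSet D' ∧ v ∈ D' ∧ #D' ≤ #D := by
  classical
  by_cases hv : v ∈ D
  · exact ⟨D, hD, hv, le_rfl⟩
  have hbD : b ∈ D := (hD b).resolve_right fun ⟨u, hu, hub⟩ => hv (hb.2 u hub.symm ▸ hu)
  refine ⟨insert v (D.erase b), ?_, mem_insert_self v _, ?_⟩
  · intro x
    by_cases hxv : x = v
    · exact Or.inl (mem_insert.2 (Or.inl hxv))
    by_cases hxb : x = b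
    · exact Or.inr ⟨v, mem_insert_self v _, hxb ▸ hb.1.symm⟩
    rcases hD x with hx | ⟨u, hu, hux⟩
    · exact Or.inl (mem_insert_of_mem (mem_erase.2 ⟨hxb, hx⟩))
    · have hub : u ≠ b := by
        rintro rfl
        exact hxv (hb.2 x hux)
      exact Or.inr ⟨u, mem_insert_of_mem (mem_erase.2 ⟨hub, hu⟩), hux⟩
  · calc #(insert v (D.erase b)) ≤ #(D.erase b) + 1 := card_insert_le v _
      _ = #D := card_erase_add_one hbD

section Finite

variable [Fintype V]

lemma IsDomSet.domNum_le (hS : G.IsDomSet S) : G.domNum ≤ #S :=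
  Nat.sInf_le ⟨S, rfl, hS⟩

lemma exists_isDomSet_card_eq_domNum (G : SimpleGraph V) :
    ∃ S, G.IsDomSet S ∧ #S = G.domNum := by
  obtain ⟨S, hS, hSdom⟩ := Nat.sInf_mem (s := {n | ∃ S : Finset V, #S = n ∧ G.IsDomSet S})
    ⟨_, univ, rfl, fun x => Or.inl (mem_univ x)⟩
  exact ⟨S, hSdom, hS⟩

lemma bondageNum_le_card {B : Finset (Sym2 V)} (hB : ↑B ⊆ G.edgeSet)
    (hlt : G.domNum < (G.deleteEdges ↑B).domNum) : G.bondageNum ≤ #B :=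
  Nat.sInf_le ⟨B, rfl, hB, hlt⟩

lemma domNum_lt_of_isIsolated (hHG : H ≤ G) (ha : H.IsIsolated a) (hva : G.Adj v a)
    (hv : ∀ D, H.IsDomSet D → ∃ D', H.IsDomSet D' ∧ v ∈ D' ∧ #D' ≤ #D) :
    G.domNum < H.domNum := by
  classical
  obtain ⟨D, hD, hDcard⟩ := H.exists_isDomSet_card_eq_domNum
  obtain ⟨D', hD', hvD', hD'D⟩ := hv D hD
  have haD' : a ∈ D' := hD'.mem_of_isIsolated ha
  calc G.domNum ≤ #(D'.erase a) := (hD'.erase_of_isIsolated hHG ha hvD' hva).domNum_le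
    _ < #D' := card_erase_lt_of_mem haD'
    _ ≤ H.domNum := hDcard ▸ hD'D

lemma bondageNum_le_one_of_isLeafAt (hab : a ≠ b) (ha : G.IsLeafAt a v)
    (hb : G.IsLeafAt b v) : G.bondageNum ≤ 1 := by
  set B : Finset (Sym2 V) := {s(v, a)}
  set H := G.deleteEdges ↑B
  have hH : ∀ {x y}, H.Adj x y ↔ G.Adj x y ∧ s(x, y) ≠ s(v, a) := by
    simp [H, B, deleteEdges_adj]
  have haH : H.IsIsolated a := fun x hax =>
    (hH.1 hax).2 (by rw [ha.2 x (hH.1 hax).1, Sym2.eq_swap])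
  have hbH : H.IsLeafAt b v := by
    refine ⟨hH.2 ⟨hb.1, ?_⟩, fun x hbx => hb.2 x (hH.1 hbx).1⟩
    rw [Sym2.eq_swap, Ne, Sym2.congr_right]
    exact hab.symm
  have hlt : G.domNum < H.domNum := by
    classical
    exact domNum_lt_of_isIsolated (deleteEdges_le _) haH ha.1.symm fun D hD =>
      hD.exists_mem_of_isLeafAt hbH
  simpa [B] using bondageNum_le_card (by simpa [B] using ha.1.symm) hlt

lemma bondageNum_le_two_of_isLeafAt {u w : V} (hu : G.IsLeafAt u v)
    (hv : ∀ x, G.Adj v x → x = u ∨ x = w) : G.bondageNum ≤ 2 := by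
  classical
  have hB : (↑(G.incidenceFinset v) : Set (Sym2 V)) = G.incidenceSet v := G.coe_incidenceFinset v
  have hvH : (G.deleteIncidenceSet v).IsIsolated v := fun x hvx =>
    (deleteIncidenceSet_adj.1 hvx).2.1 rfl
  have huH : (G.deleteIncidenceSet v).IsIsolated u := fun x hux =>
    (deleteIncidenceSet_adj.1 hux).2.2 (hu.2 x (deleteIncidenceSet_adj.1 hux).1)
  have hlt : G.domNum < (G.deleteIncidenceSet v).domNum :=
    domNum_lt_of_isIsolated (deleteIncidenceSet_le G v) huH hu.1.symm fun D hD =>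
      ⟨D, hD, hD.mem_of_isIsolated hvH, le_rfl⟩
  have hdeg : G.degree v ≤ 2 := by
    calc G.degree v = #(G.neighborFinset v) := (card_neighborFinset_eq_degree G v).symm
      _ ≤ #{u, w} := card_le_card fun x hx => by
        simpa using hv x ((mem_neighborFinset G v x).1 hx)
      _ ≤ 2 := card_le_two
  calc G.bondageNum ≤ #(G.incidenceFinset v) :=
        bondageNum_le_card (hB ▸ G.incidenceSet_subset v) (by rwa [hB])
    _ ≤ 2 := (card_incidenceFinset_eq_degree G v).trans_le hdeg

end Finite

section Tree

variable {r x w : V}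

lemma IsAcyclic.eq_penultimate_of_dist_add_one_eq (hG : G.IsAcyclic) {p : G.Walk r x}
    (hp : p.IsPath) (hxw : G.Adj x w) (hd : G.dist r w + 1 = G.dist r x) :
    w = p.penultimate := by
  classical
  obtain ⟨q, hq, hqlen⟩ := (p.reachable.trans hxw.reachable).exists_path_of_dist
  have hxq : x ∉ q.support := fun hx => by
    have := (dist_le (q.takeUntil x hx)).trans (q.length_takeUntil_le_length hx)
    omega
  exact hG.eq_penultimate_of_adj_end hp hxw
    (hG.mem_support_of_ne_mem_support_of_adj_of_isPath hp hq hxw hxq)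

lemma IsTree.eq_of_dist_add_one_eq (hT : G.IsTree) {w₁ w₂ : V} (h₁ : G.Adj x w₁)
    (h₂ : G.Adj x w₂) (hd₁ : G.dist r w₁ + 1 = G.dist r x)
    (hd₂ : G.dist r w₂ + 1 = G.dist r x) : w₁ = w₂ := by
  obtain ⟨p, hp, -⟩ := hT.connected.exists_path_of_dist r x
  exact (hT.isAcyclic.eq_penultimate_of_dist_add_one_eq hp h₁ hd₁).trans
    (hT.isAcyclic.eq_penultimate_of_dist_add_one_eq hp h₂ hd₂).symm

lemma IsTree.exists_isLeafAt_of_forall_dist_le [Nontrivial V] (hT : G.IsTree)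
    (hmax : ∀ y, G.dist r y ≤ G.dist r x) :
    ∃ w, G.IsLeafAt x w ∧ G.dist r w + 1 = G.dist r x := by
  have hclose : ∀ y, G.Adj x y → G.dist r y + 1 = G.dist r x := fun y hxy => by
    have := hT.dist_eq_dist_add_one_of_adj r hxy
    have := hmax y
    omega
  obtain ⟨w, hxw⟩ := hT.connected.preconnected.exists_adj_of_nontrivial x
  refine ⟨w, ⟨hxw, fun y hxy => ?_⟩, hclose w hxw⟩
  exact hT.eq_of_dist_add_one_eq hxy hxw (hclose y hxy) (hclose w hxw)

lemma IsTree.exists_two_leaves_at_or_leaf_at_degree_le_two [Finite V] [Nontrivial V]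
    (hT : G.IsTree) :
    (∃ v a b, a ≠ b ∧ G.IsLeafAt a v ∧ G.IsLeafAt b v) ∨
      ∃ u v w, G.IsLeafAt u v ∧ ∀ x, G.Adj v x → x = u ∨ x = w := by
  obtain ⟨r⟩ := hT.connected.nonempty
  obtain ⟨v₀, hmax⟩ := Finite.exists_max (G.dist r)
  obtain ⟨v, hv₀, hdv⟩ := hT.exists_isLeafAt_of_forall_dist_le hmax
  by_cases hsib : ∃ b, G.Adj v b ∧ b ≠ v₀ ∧ G.dist r b = G.dist r v₀
  · obtain ⟨b, hvb, hbv₀, hdb⟩ := hsib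
    obtain ⟨w, hb, -⟩ := hT.exists_isLeafAt_of_forall_dist_le (x := b) (hdb ▸ hmax)
    exact Or.inl ⟨v, v₀, b, hbv₀.symm, hv₀, hb.2 v hvb.symm ▸ hb⟩
  push Not at hsib
  have hparent : ∀ y, G.Adj v y → y ≠ v₀ → G.dist r y + 1 = G.dist r v := by
    intro y hvy hy
    have := hT.dist_eq_dist_add_one_of_adj r hvy
    have := hsib y hvy hy
    omega
  obtain ⟨w, hw⟩ : ∃ w, ∀ y, G.Adj v y → y ≠ v₀ → y = w := by
    by_cases hother : ∃ w, G.Adj v w ∧ w ≠ v₀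
    · obtain ⟨w, hvw, hw⟩ := hother
      exact ⟨w, fun y hvy hy =>
        hT.eq_of_dist_add_one_eq hvy hvw (hparent y hvy hy) (hparent w hvw hw)⟩
    · push Not at hother
      exact ⟨v₀, fun y hvy hy => absurd (hother y hvy) hy⟩
  exact Or.inr ⟨v₀, v, w, hv₀, fun y hvy => or_iff_not_imp_left.2 (hw y hvy)⟩

end Tree

end SimpleGraph

theorem bondage_tree_le_two [Fintype V] (G : SimpleGraph V)
    (hT : G.IsTree) (h2 : 2 ≤ Fintype.card V) :
    G.bondageNum ≤ 2 := by
  have : Nontrivial V := Fintype.one_lt_card_iff_nontrivial.1 h2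
  rcases hT.exists_two_leaves_at_or_leaf_at_degree_le_two with
    ⟨v, a, b, hab, ha, hb⟩ | ⟨u, v, w, hu, hv⟩
  · exact (bondageNum_le_one_of_isLeafAt hab ha hb).trans one_le_two
  · exact bondageNum_le_two_of_isLeafAt hu hv
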